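/- arXiv:2407.08530 — 4 statements merged into one kernel-verified Lean document; each statement's English description precedes it below -/
import Mathlib

section
/- Fix h, h' ∈ 𝓗₀ with h(p) = r and h'(p) = r' where r' > r, for some face p ∈ Λ'. Then for every k ∈ {0, 1, …, r'-r}, the pair Υ_p^k(h,h') again lies in 𝓗₀ × 𝓗₀; that is, the contraction map preserves the step boundary condition. -/
open Classical

/-- Height-function property for the stochastic six-vertex model, faces indexed by `ℕ × ℕ`. -/
def IsHeight (h : ℕ × ℕ → ℤ) : Prop :=
  ∀ i j : ℕ, (h (i + 1, j) - h (i, j) ∈ ({0, -1} : Set ℤ)) ∧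
    (h (i, j + 1) - h (i, j) ∈ ({0, 1} : Set ℤ))

/-- Step boundary condition: `h(i,0) = 0` and `h(0,j) = j` in the face indexing. -/
def IsHeight0 (h : ℕ × ℕ → ℤ) : Prop :=
  IsHeight h ∧ (∀ i : ℕ, h (i, 0) = 0) ∧ (∀ j : ℕ, h (0, j) = (j : ℤ))

/-- Nearest-neighbour (Manhattan) adjacency of faces. -/
def FaceAdj (p q : ℕ × ℕ) : Prop :=
  q = (p.1 + 1, p.2) ∨ p = (q.1 + 1, q.2) ∨ q = (p.1, p.2 + 1) ∨ p = (q.1, q.2 + 1)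

/-- Connected component of the region `S` containing `p` (empty if `p ∉ S`). -/
def comp (S : Set (ℕ × ℕ)) (p : ℕ × ℕ) : Set (ℕ × ℕ) :=
  {q | q ∈ S ∧ Relation.ReflTransGen (fun x y => x ∈ S ∧ y ∈ S ∧ FaceAdj x y) p q}

/-- The involution `ι_p`: swap the two heights on the connected component of their
disagreement region containing `p` (identity if they agree at `p`). -/
noncomputable def iota (p : ℕ × ℕ) (g g' : ℕ × ℕ → ℤ) : (ℕ × ℕ → ℤ) × (ℕ × ℕ → ℤ) :=
  (fun x => if x ∈ comp {y | g y ≠ g' y} p then g' x else g x,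
   fun x => if x ∈ comp {y | g y ≠ g' y} p then g x else g' x)

/-- The contraction map `Υ_p^k = (τ_{-k} × Id) ∘ ι_p ∘ (τ_k × Id)`. -/
noncomputable def Upsilon (p : ℕ × ℕ) (k : ℤ) (g g' : ℕ × ℕ → ℤ) :
    (ℕ × ℕ → ℤ) × (ℕ × ℕ → ℤ) :=
  (fun x => (iota p (fun y => g y + k) g').1 x - k, (iota p (fun y => g y + k) g').2)

lemma faceAdj_symm {a b : ℕ × ℕ} (h : FaceAdj a b) : FaceAdj b a := by
  unfold FaceAdj at *; tauto

/-- Across an edge, the difference `g - g'` of two height functions changes by at most 1. -/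
lemma adj_diff {g g' : ℕ × ℕ → ℤ} (Hg : IsHeight g) (Hg' : IsHeight g')
    {a b : ℕ × ℕ} (h : FaceAdj a b) :
    (g b - g' b) - (g a - g' a) ≤ 1 ∧ -1 ≤ (g b - g' b) - (g a - g' a) := by
  rcases h with h | h | h | h
  · subst h
    have h1 := (Hg a.1 a.2).1; have h2 := (Hg' a.1 a.2).1
    simp only [Set.mem_insert_iff, Set.mem_singleton_iff] at h1 h2
    have e3 : g a = g (a.1, a.2) := rfl
    have e4 : g' a = g' (a.1, a.2) := rfl
    omega
  · subst h
    have h1 := (Hg b.1 b.2).1; have h2 := (Hg' b.1 b.2).1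
    simp only [Set.mem_insert_iff, Set.mem_singleton_iff] at h1 h2
    have e3 : g b = g (b.1, b.2) := rfl
    have e4 : g' b = g' (b.1, b.2) := rfl
    omega
  · subst h
    have h1 := (Hg a.1 a.2).2; have h2 := (Hg' a.1 a.2).2
    simp only [Set.mem_insert_iff, Set.mem_singleton_iff] at h1 h2
    have e3 : g a = g (a.1, a.2) := rfl
    have e4 : g' a = g' (a.1, a.2) := rfl
    omega
  · subst h
    have h1 := (Hg b.1 b.2).2; have h2 := (Hg' b.1 b.2).2
    simp only [Set.mem_insert_iff, Set.mem_singleton_iff] at h1 h2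
    have e3 : g b = g (b.1, b.2) := rfl
    have e4 : g' b = g' (b.1, b.2) := rfl
    omega

/-- On the component of `p` in the disagreement region, `g < g'` provided `g p ≤ g' p`. -/
lemma comp_neg {g g' : ℕ × ℕ → ℤ} (Hg : IsHeight g) (Hg' : IsHeight g') {p : ℕ × ℕ}
    (hp0 : g p - g' p ≤ 0) :
    ∀ q ∈ comp {y | g y ≠ g' y} p, g q - g' q < 0 := by
  suffices H : ∀ q, Relation.ReflTransGen
      (fun x y => x ∈ {y | g y ≠ g' y} ∧ y ∈ {y | g y ≠ g' y} ∧ FaceAdj x y) p q →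
      g q ≠ g' q → g q - g' q < 0 by
    intro q hq; exact H q hq.2 hq.1
  intro q hchain
  induction hchain with
  | refl => intro hne; omega
  | @tail b c h1 h2 ih =>
      intro hne
      obtain ⟨hbS, hcS, hadj⟩ := h2
      simp only [Set.mem_setOf_eq] at hbS
      have hb := ih hbS
      have hd := adj_diff Hg Hg' hadj
      omega

lemma comp_closed {S : Set (ℕ × ℕ)} {p x y : ℕ × ℕ} (hx : x ∈ comp S p) (hy : y ∈ S)
    (hadj : FaceAdj x y) : y ∈ comp S p :=
  ⟨hy, hx.2.tail ⟨hx.1, hy, hadj⟩⟩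

/-- Swapping with another height function on a suitably closed set preserves `IsHeight`. -/
lemma swap_isHeight {g g' : ℕ × ℕ → ℤ} (Hg : IsHeight g) (Hg' : IsHeight g')
    (C : Set (ℕ × ℕ))
    (hC : ∀ x ∈ C, ∀ y, FaceAdj x y → y ∉ C → g y = g' y) :
    IsHeight (fun x => if x ∈ C then g' x else g x) := by
  have key : ∀ a b : ℕ × ℕ, FaceAdj a b →
      ((if b ∈ C then g' b else g b) - (if a ∈ C then g' a else g a) = g b - g a) ∨
      ((if b ∈ C then g' b else g b) - (if a ∈ C then g' a else g a) = g' b - g' a) := by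
    intro a b hadj
    by_cases ha : a ∈ C <;> by_cases hb : b ∈ C <;> simp only [ha, hb, if_pos, if_neg,
      if_true, if_false]
    · right; trivial
    · right; rw [hC a ha b hadj hb]
    · right; rw [hC b hb a (faceAdj_symm hadj) ha]
    · left; trivial
  intro i j
  constructor
  · rcases key (i, j) (i + 1, j) (Or.inl rfl) with hk | hk
    · simp only at hk ⊢; rw [hk]; exact (Hg i j).1
    · simp only at hk ⊢; rw [hk]; exact (Hg' i j).1
  · rcases key (i, j) (i, j + 1) (Or.inr (Or.inr (Or.inl rfl))) with hk | hk
    · simp only at hk ⊢; rw [hk]; exact (Hg i j).2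
    · simp only at hk ⊢; rw [hk]; exact (Hg' i j).2

lemma isHeight_shift {g : ℕ × ℕ → ℤ} (Hg : IsHeight g) (c : ℤ) :
    IsHeight (fun x => g x + c) := by
  intro i j
  have h1 := (Hg i j).1
  have h2 := (Hg i j).2
  constructor
  · simpa using h1
  · simpa using h2

/-- Proposition 2.7: the contraction map `Υ_p^k` preserves the
step boundary condition for `0 ≤ k ≤ r' - r`. -/
theorem upsilon_preserves_step (h h' : ℕ × ℕ → ℤ)
    (Hh : IsHeight0 h) (Hh' : IsHeight0 h') (p : ℕ × ℕ) (r r' : ℤ)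
    (hp : h p = r) (hp' : h' p = r') (hlt : r < r') :
    ∀ k : ℤ, 0 ≤ k → k ≤ r' - r →
      IsHeight0 (Upsilon p k h h').1 ∧ IsHeight0 (Upsilon p k h h').2 := by
  intro k hk0 hk1
  set g : ℕ × ℕ → ℤ := fun y => h y + k with hg
  have Hg : IsHeight g := isHeight_shift Hh.1 k
  set C : Set (ℕ × ℕ) := comp {y | g y ≠ h' y} p with hCdef
  have hp0 : g p - h' p ≤ 0 := by simp only [hg]; omega
  have hneg : ∀ q ∈ C, g q - h' q < 0 := comp_neg Hg Hh'.1 hp0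
  have hC : ∀ x ∈ C, ∀ y, FaceAdj x y → y ∉ C → g y = h' y := by
    intro x hx y hadj hyC
    by_contra hne
    exact hyC (comp_closed hx hne hadj)
  have hC' : ∀ x ∈ C, ∀ y, FaceAdj x y → y ∉ C → h' y = g y := by
    intro x hx y hadj hyC
    exact (hC x hx y hadj hyC).symm
  -- boundary faces are not in C
  have hbd1 : ∀ i : ℕ, ((i : ℕ), (0 : ℕ)) ∉ C := by
    intro i hmem
    have := hneg _ hmem
    have e1 : g (i, 0) = k := by simp only [hg]; rw [Hh.2.1 i]; ring
    have e2 : h' (i, 0) = 0 := Hh'.2.1 i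
    omega
  have hbd2 : ∀ j : ℕ, ((0 : ℕ), (j : ℕ)) ∉ C := by
    intro j hmem
    have := hneg _ hmem
    have e1 : g (0, j) = j + k := by simp only [hg]; rw [Hh.2.2 j]
    have e2 : h' (0, j) = j := Hh'.2.2 j
    omega
  have hf1 : IsHeight (fun x => if x ∈ C then h' x else g x) :=
    swap_isHeight Hg Hh'.1 C hC
  have hswapC : (fun x => if x ∈ C then g x else h' x)
      = (fun x => if x ∈ C then g x else h' x) := rfl
  have hf2 : IsHeight (fun x => if x ∈ C then g x else h' x) := by
    have := swap_isHeight Hh'.1 Hg C hC'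
    exact this
  constructor
  · refine ⟨?_, ?_, ?_⟩
    · show IsHeight (fun x => (if x ∈ C then h' x else g x) - k)
      have : (fun x => (if x ∈ C then h' x else g x) - k)
          = fun x => (if x ∈ C then h' x else g x) + (-k) := by
        funext x; ring
      rw [this]
      exact isHeight_shift hf1 (-k)
    · intro i
      show (if ((i : ℕ), (0 : ℕ)) ∈ C then h' (i, 0) else g (i, 0)) - k = 0
      rw [if_neg (hbd1 i)]
      simp only [hg]; rw [Hh.2.1 i]; ring
    · intro j
      show (if ((0 : ℕ), (j : ℕ)) ∈ C then h' (0, j) else g (0, j)) - k = (j : ℤ)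
      rw [if_neg (hbd2 j)]
      simp only [hg]; rw [Hh.2.2 j]; ring
  · refine ⟨?_, ?_, ?_⟩
    · show IsHeight (fun x => if x ∈ C then g x else h' x)
      exact hf2
    · intro i
      show (if ((i : ℕ), (0 : ℕ)) ∈ C then g (i, 0) else h' (i, 0)) = 0
      rw [if_neg (hbd1 i)]
      exact Hh'.2.1 i
    · intro j
      show (if ((0 : ℕ), (j : ℕ)) ∈ C then g (0, j) else h' (0, j)) = (j : ℤ)
      rw [if_neg (hbd2 j)]
      exact Hh'.2.2 j
end

section
/- Let q ∈ (0,1) and let S be a ℤ-valued random variable with P(S = k) proportional to q^{k(k-1)/2}, and let χ be an independent ℤ_{≥0}-valued random variable with P(χ = k) = ∏_{j=k+1}^∞ (1 - q^j) − ∏_{j=k}^∞ (1 - q^j). Then for every n ∈ ℤ, P(χ + S ≤ n) = ∏_{i=0}^∞ 1/(1 + q^{n+i}). -/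
open MeasureTheory ProbabilityTheory Real Filter Topology

noncomputable section CdfAux
namespace CdfAux

variable {q : ℝ}

lemma half_mul (m : ℤ) : 2 * (m * (m - 1) / 2) = m * (m - 1) := by
  refine Int.mul_ediv_cancel' ?_
  have h := (Int.even_mul_succ_self (m - 1)).two_dvd
  have : (m - 1) * (m - 1 + 1) = m * (m - 1) := by ring
  rwa [this] at h

def θ (q : ℝ) (m : ℤ) : ℝ := q ^ (m * (m - 1) / 2)

lemma θ_succ (hq : q ≠ 0) (m : ℤ) : θ q (m + 1) = θ q m * q ^ m := by
  unfold θ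
  rw [← zpow_add₀ hq]
  congr 1
  have h1 := half_mul (m + 1)
  have h2 := half_mul m
  have key : 2 * ((m + 1) * (m + 1 - 1) / 2) = 2 * (m * (m - 1) / 2 + m) := by
    rw [h1]; rw [mul_add, h2]; ring
  linarith

lemma θ_shift (hq : q ≠ 0) (n : ℤ) (k : ℕ) :
    θ q (n - k) = θ q n * (θ q k * (q ^ (1 - n)) ^ k) := by
  unfold θ
  rw [← zpow_natCast (q ^ (1 - n)) k, ← zpow_mul, ← zpow_add₀ hq, ← zpow_add₀ hq]
  congr 1
  have h1 := half_mul (n - k)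
  have h2 := half_mul n
  have h3 := half_mul (k : ℤ)
  have key : 2 * ((n - k) * (n - k - 1) / 2)
      = 2 * (n * (n - 1) / 2 + ((k : ℤ) * ((k : ℤ) - 1) / 2 + (1 - n) * k)) := by
    rw [h1]; rw [mul_add, mul_add, h2, h3]; ring
  linarith

lemma θ_zero : θ q 0 = 1 := by simp [θ]

def pk (q : ℝ) (k : ℕ) : ℝ := ∏ j ∈ Finset.range k, (1 - q ^ (j + 1))

lemma pow_lt_one' (hq0 : 0 < q) (hq1 : q < 1) (k : ℕ) : q ^ (k + 1) < 1 :=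
  pow_lt_one₀ hq0.le hq1 (Nat.succ_ne_zero k)

lemma pk_pos (hq0 : 0 < q) (hq1 : q < 1) (k : ℕ) : 0 < pk q k :=
  Finset.prod_pos fun j _ => by
    have := pow_lt_one' hq0 hq1 j; linarith

lemma pk_succ (k : ℕ) : pk q (k + 1) = pk q k * (1 - q ^ (k + 1)) :=
  Finset.prod_range_succ _ _

def ee (q z : ℝ) (k : ℕ) : ℝ := θ q k * z ^ k / pk q k

lemma ee_zero (z : ℝ) : ee q z 0 = 1 := by simp [ee, θ_zero, pk]

lemma ee_succ (hq0 : 0 < q) (hq1 : q < 1) (z : ℝ) (k : ℕ) :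
    ee q z (k + 1) = ee q z k * (q ^ (k : ℤ) * z / (1 - q ^ (k + 1))) := by
  have h1 : ((k : ℤ)) + 1 = ((k + 1 : ℕ) : ℤ) := by push_cast; ring
  have hθ : θ q ((k + 1 : ℕ) : ℤ) = θ q k * q ^ (k : ℤ) := by
    rw [← h1, θ_succ (ne_of_gt hq0)]
  have hpk := pk_pos hq0 hq1 k
  have hkk : (1 : ℝ) - q ^ (k + 1) > 0 := by have := pow_lt_one' hq0 hq1 k; linarith
  unfold ee
  rw [hθ, pk_succ, pow_succ]
  field_simp

lemma summable_ee (hq0 : 0 < q) (hq1 : q < 1) (z : ℝ) : Summable (ee q z) := by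
  apply summable_of_ratio_norm_eventually_le (r := 1/2) (by norm_num)
  have h0 : Tendsto (fun k : ℕ => q ^ k * (|z| / (1 - q))) atTop (𝓝 0) := by
    simpa using (tendsto_pow_atTop_nhds_zero_of_lt_one hq0.le hq1).mul_const (|z| / (1 - q))
  filter_upwards [h0.eventually (eventually_le_nhds (by norm_num : (0:ℝ) < 1/2))] with k hk
  rw [ee_succ hq0 hq1 z k, norm_mul, mul_comm]
  have hq1' : (0:ℝ) < 1 - q := by linarith
  have hkk : (0:ℝ) < 1 - q ^ (k + 1) := by have := pow_lt_one' hq0 hq1 k; linarith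
  have hr : ‖q ^ (k : ℤ) * z / (1 - q ^ (k + 1))‖ ≤ 1 / 2 := by
    rw [norm_div, norm_mul, Real.norm_eq_abs, Real.norm_eq_abs, Real.norm_eq_abs,
      abs_of_pos hkk, abs_of_pos (zpow_pos hq0 (k : ℤ))]
    have hle : 1 - q ≤ 1 - q ^ (k + 1) := by
      have : q ^ (k+1) ≤ q := by
        calc q ^ (k+1) ≤ q ^ 1 := pow_le_pow_of_le_one hq0.le hq1.le (by omega)
          _ = q := pow_one q
      linarith
    have ha : 0 ≤ q ^ (k : ℤ) * |z| := by positivity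
    calc q ^ (k : ℤ) * |z| / (1 - q ^ (k + 1)) ≤ q ^ (k : ℤ) * |z| / (1 - q) :=
          div_le_div_of_nonneg_left ha hq1' hle
      _ = q ^ k * (|z| / (1 - q)) := by rw [zpow_natCast]; ring
      _ ≤ 1 / 2 := hk
  calc ‖q ^ (k:ℤ) * z / (1 - q ^ (k+1))‖ * ‖ee q z k‖ ≤ (1/2) * ‖ee q z k‖ := by
        gcongr
    _ = 1/2 * ‖ee q z k‖ := rfl

def Efun (q z : ℝ) : ℝ := ∑' k, ee q z k

lemma Efun_eq (hq0 : 0 < q) (hq1 : q < 1) (z : ℝ) :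
    Efun q z = (1 + z) * Efun q (q * z) := by
  have hse := summable_ee hq0 hq1 z
  have hsq := summable_ee hq0 hq1 (q * z)
  have key : ∀ k : ℕ, ee q z (k + 1) - ee q (q * z) (k + 1) = z * ee q (q * z) k := by
    intro k
    rw [ee_succ hq0 hq1 z k, ee_succ hq0 hq1 (q * z) k]
    have hkk : (1:ℝ) - q ^ (k + 1) ≠ 0 := by
      have := pow_lt_one' hq0 hq1 k; linarith
    have hqz : ee q (q*z) k = ee q z k * q ^ k := by
      unfold ee
      rw [mul_pow, ← zpow_natCast q k]
      ring
    rw [hqz]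
    field_simp
    simp only [zpow_natCast]
    ring
  have hsub : Efun q z - Efun q (q * z) = ∑' k, (ee q z k - ee q (q * z) k) :=
    (Summable.tsum_sub hse hsq).symm
  have hz : ∑' k, (ee q z k - ee q (q * z) k) = z * Efun q (q * z) := by
    rw [Summable.tsum_eq_zero_add (hse.sub hsq)]
    simp only [ee_zero, sub_self, zero_add]
    calc (∑' k : ℕ, (ee q z (k+1) - ee q (q*z) (k+1)))
        = ∑' k : ℕ, z * ee q (q*z) k := by
          exact tsum_congr key
      _ = z * Efun q (q*z) := tsum_mul_left
  have := hsub.trans hz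
  unfold Efun at *
  linarith [this]


/-! ### infinite products via exp/log -/

lemma hasProd_exp_log (f : ℕ → ℝ) (hpos : ∀ n, 0 < f n)
    (h : Summable fun n => Real.log (f n)) :
    HasProd f (Real.exp (∑' n, Real.log (f n))) := by
  have h1 := h.hasSum.rexp
  have h2 : Real.exp ∘ (fun n => Real.log (f n)) = f :=
    funext fun n => Real.exp_log (hpos n)
  rwa [h2] at h1

lemma abs_log_le {x C : ℝ} (hx : 0 < x) (h1 : x - 1 ≤ C) (h2 : x⁻¹ - 1 ≤ C) :
    |Real.log x| ≤ C := by
  have l1 := Real.log_le_sub_one_of_pos hx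
  have l2 := Real.log_le_sub_one_of_pos (inv_pos.2 hx)
  rw [Real.log_inv] at l2
  rw [abs_le]
  constructor <;> linarith

/-! ### the product `B` -/

lemma summable_qpow (hq0 : 0 < q) (hq1 : q < 1) (n : ℤ) :
    Summable (fun i : ℕ => q ^ (n + (i:ℤ))) := by
  have : (fun i : ℕ => q ^ (n + (i:ℤ))) = fun i : ℕ => q ^ n * q ^ i := by
    funext i
    rw [zpow_add₀ (ne_of_gt hq0), zpow_natCast]
  rw [this]
  exact (summable_geometric_of_lt_one hq0.le hq1).mul_left _

lemma tsum_qpow (hq0 : 0 < q) (hq1 : q < 1) (n : ℤ) :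
    ∑' i : ℕ, q ^ (n + (i:ℤ)) = q ^ n * (1 - q)⁻¹ := by
  have : (fun i : ℕ => q ^ (n + (i:ℤ))) = fun i : ℕ => q ^ n * q ^ i := by
    funext i
    rw [zpow_add₀ (ne_of_gt hq0), zpow_natCast]
  rw [this, tsum_mul_left, tsum_geometric_of_lt_one hq0.le hq1]

lemma summable_logB (hq0 : 0 < q) (hq1 : q < 1) (n : ℤ) :
    Summable (fun i : ℕ => Real.log (1 + q ^ (n + (i:ℤ)))) := by
  apply Summable.of_norm_bounded (summable_qpow hq0 hq1 n)
  intro i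
  have hp : (0:ℝ) < q ^ (n + (i:ℤ)) := zpow_pos hq0 _
  rw [Real.norm_eq_abs]
  apply abs_log_le (by linarith)
  · linarith
  · have h1 : (1:ℝ) ≤ 1 + q ^ (n + (i:ℤ)) := by linarith
    have := inv_le_one_of_one_le₀ h1
    linarith

def LB (q : ℝ) (n : ℤ) : ℝ := ∑' i : ℕ, Real.log (1 + q ^ (n + (i:ℤ)))

def B (q : ℝ) (n : ℤ) : ℝ := ∏' i : ℕ, (1 + q ^ (n + (i:ℤ)))

lemma B_hasProd (hq0 : 0 < q) (hq1 : q < 1) (n : ℤ) :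
    HasProd (fun i : ℕ => 1 + q ^ (n + (i:ℤ))) (Real.exp (LB q n)) :=
  hasProd_exp_log _ (fun i => by have : (0:ℝ) < q ^ (n + (i:ℤ)) := zpow_pos hq0 _; linarith)
    (summable_logB hq0 hq1 n)

lemma B_eq_exp (hq0 : 0 < q) (hq1 : q < 1) (n : ℤ) : B q n = Real.exp (LB q n) :=
  (B_hasProd hq0 hq1 n).tprod_eq

lemma B_pos (hq0 : 0 < q) (hq1 : q < 1) (n : ℤ) : 0 < B q n := by
  rw [B_eq_exp hq0 hq1]; exact Real.exp_pos _

lemma LB_nonneg (hq0 : 0 < q) (hq1 : q < 1) (n : ℤ) : 0 ≤ LB q n :=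
  tsum_nonneg fun i => Real.log_nonneg (by have : (0:ℝ) < q ^ (n + (i:ℤ)) := zpow_pos hq0 _; linarith)

lemma LB_le (hq0 : 0 < q) (hq1 : q < 1) (n : ℤ) : LB q n ≤ q ^ n * (1 - q)⁻¹ := by
  rw [← tsum_qpow hq0 hq1 n]
  apply Summable.tsum_le_tsum _ (summable_logB hq0 hq1 n) (summable_qpow hq0 hq1 n)
  intro i
  have hp : (0:ℝ) < q ^ (n + (i:ℤ)) := zpow_pos hq0 _
  have := Real.log_le_sub_one_of_pos (show (0:ℝ) < 1 + q ^ (n + (i:ℤ)) by linarith)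
  linarith

lemma B_peel (hq0 : 0 < q) (hq1 : q < 1) (n : ℤ) :
    B q n = (1 + q ^ n) * B q (n + 1) := by
  have hm1 : Multipliable (fun i : ℕ => 1 + q ^ ((n + 1) + (i:ℤ))) :=
    (B_hasProd hq0 hq1 (n + 1)).multipliable
  have hm' : Multipliable (fun i : ℕ => 1 + q ^ (n + ((i + 1 : ℕ) : ℤ))) := by
    apply hm1.congr
    intro i
    rw [show (n + 1) + (i : ℤ) = n + ((i + 1 : ℕ) : ℤ) by push_cast; ring]
  have h := tprod_eq_zero_mul' (f := fun i : ℕ => 1 + q ^ (n + (i:ℤ))) hm'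
  have h2 : ∏' i : ℕ, (1 + q ^ (n + ((i + 1 : ℕ) : ℤ))) = B q (n + 1) :=
    tprod_congr fun i => by
      rw [show n + ((i + 1 : ℕ) : ℤ) = (n + 1) + (i : ℤ) by push_cast; ring]
  rw [B, h, h2]
  norm_num

lemma tendsto_zpow_atTop (hq0 : 0 < q) (hq1 : q < 1) :
    Tendsto (fun n : ℤ => q ^ n) atTop (𝓝 0) := by
  have h := tendsto_pow_atTop_nhds_zero_of_lt_one hq0.le hq1
  have ht : Tendsto (fun n : ℤ => n.toNat) atTop atTop := by
    apply tendsto_atTop_atTop.2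
    intro b
    exact ⟨(b : ℤ), fun a ha => by omega⟩
  have := h.comp ht
  apply this.congr'
  filter_upwards [eventually_ge_atTop (0:ℤ)] with n hn
  simp only [Function.comp_apply]
  rw [← zpow_natCast, Int.toNat_of_nonneg hn]

lemma B_tendsto (hq0 : 0 < q) (hq1 : q < 1) :
    Tendsto (fun n : ℤ => B q n) atTop (𝓝 1) := by
  have hLB : Tendsto (fun n : ℤ => LB q n) atTop (𝓝 0) := by
    apply tendsto_of_tendsto_of_tendsto_of_le_of_le
      (tendsto_const_nhds : Tendsto (fun _ : ℤ => (0:ℝ)) atTop (𝓝 0))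
      (by simpa using (tendsto_zpow_atTop hq0 hq1).mul_const (1-q)⁻¹)
      (fun n => LB_nonneg hq0 hq1 n) (fun n => LB_le hq0 hq1 n)
  have := (Real.continuous_exp.tendsto 0).comp hLB
  simp only [Real.exp_zero] at this
  apply this.congr
  intro n
  exact (B_eq_exp hq0 hq1 n).symm

lemma B_inv (hq0 : 0 < q) (hq1 : q < 1) (n : ℤ) :
    (∏' i : ℕ, 1 / (1 + q ^ (n + (i:ℤ)))) = 1 / B q n := by
  have hpos : ∀ i : ℕ, (0:ℝ) < 1 + q ^ (n + (i:ℤ)) :=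
    fun i => by have : (0:ℝ) < q ^ (n + (i:ℤ)) := zpow_pos hq0 _; linarith
  have hl : Summable (fun i : ℕ => Real.log ((1 + q ^ (n + (i:ℤ)))⁻¹)) := by
    simp only [Real.log_inv]
    exact (summable_logB hq0 hq1 n).neg
  have h := hasProd_exp_log (fun i : ℕ => (1 + q ^ (n + (i:ℤ)))⁻¹)
    (fun i => inv_pos.2 (hpos i)) hl
  have hval : (∑' i : ℕ, Real.log ((1 + q ^ (n + (i:ℤ)))⁻¹)) = - LB q n := by
    simp only [Real.log_inv]
    rw [tsum_neg]
    rfl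
  rw [hval] at h
  have := h.tprod_eq
  simp only [one_div]
  rw [this, B_eq_exp hq0 hq1 n, Real.exp_neg]

/-! ### Pinf -/

def Pinf (q : ℝ) (k : ℕ) : ℝ := ∏' j : ℕ, (1 - q ^ (j + k))

lemma pinf_factor_pos (hq0 : 0 < q) (hq1 : q < 1) {k : ℕ} (hk : k ≠ 0) (j : ℕ) :
    (0:ℝ) < 1 - q ^ (j + k) := by
  have : q ^ (j + k) < 1 := pow_lt_one₀ hq0.le hq1 (by omega)
  linarith

lemma mult_pinf (hq0 : 0 < q) (hq1 : q < 1) {k : ℕ} (hk : k ≠ 0) :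
    Multipliable (fun j : ℕ => 1 - q ^ (j + k)) := by
  have hpos := pinf_factor_pos hq0 hq1 hk
  refine (hasProd_exp_log _ hpos ?_).multipliable
  apply Summable.of_norm_bounded (g := fun j : ℕ => q ^ (j+1) * (1-q)⁻¹)
  · apply Summable.mul_right
    exact (summable_geometric_of_lt_one hq0.le hq1).comp_injective (add_left_injective 1)
  · intro j
    have hpj : (0:ℝ) < q ^ (j+k) := pow_pos hq0 _
    have hlt : q ^ (j+k) < 1 := by have := hpos j; linarith
    have hq' : (0:ℝ) < 1 - q := by linarith
    have hle1 : q ^ (j+k) ≤ q ^ (j+1) := pow_le_pow_of_le_one hq0.le hq1.le (by omega)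
    have hle : q ^ (j+k) ≤ q := by
      calc q ^ (j+k) ≤ q ^ 1 := pow_le_pow_of_le_one hq0.le hq1.le (by omega)
        _ = q := pow_one q
    rw [Real.norm_eq_abs]
    apply abs_log_le (hpos j)
    · have h0 : (0:ℝ) < q ^ (j+1) * (1-q)⁻¹ := by positivity
      linarith
    · have hne : (1:ℝ) - q ^ (j+k) ≠ 0 := ne_of_gt (by linarith)
      have heq : (1 - q ^ (j+k))⁻¹ - 1 = q ^ (j+k) / (1 - q ^ (j+k)) := by
        rw [eq_div_iff hne, sub_mul, inv_mul_cancel₀ hne]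
        ring
      rw [heq]
      calc q ^ (j+k) / (1 - q ^ (j+k)) ≤ q ^ (j+k) / (1 - q) :=
            div_le_div_of_nonneg_left hpj.le hq' (by linarith)
        _ ≤ q ^ (j+1) / (1 - q) := by gcongr
        _ = q ^ (j+1) * (1-q)⁻¹ := by ring

lemma Pinf_split (hq0 : 0 < q) (hq1 : q < 1) (k : ℕ) :
    Pinf q 1 = pk q k * Pinf q (k + 1) := by
  have hm' : Multipliable (fun j : ℕ => 1 - q ^ ((j + k) + 1)) := by
    have := mult_pinf hq0 hq1 (k := k + 1) (Nat.succ_ne_zero k)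
    apply this.congr
    intro j
    rw [show j + (k + 1) = (j + k) + 1 by omega]
  have h := Multipliable.prod_mul_tprod_nat_mul' (f := fun j : ℕ => 1 - q ^ (j + 1)) (k := k) hm'
  unfold Pinf pk
  rw [← h]
  rfl

lemma Pinf_zero : Pinf q 0 = 0 := by
  have h : HasProd (fun j : ℕ => 1 - q ^ (j + 0)) 0 := by
    have heq : (fun s : Finset ℕ => ∏ b ∈ s, (1 - q ^ (b + 0))) =ᶠ[atTop] (fun _ => (0:ℝ)) := by
      filter_upwards [Filter.eventually_ge_atTop ({0} : Finset ℕ)] with s hs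
      exact Finset.prod_eq_zero (hs (Finset.mem_singleton_self 0)) (by norm_num)
    exact Filter.Tendsto.congr' heq.symm tendsto_const_nhds
  exact h.tprod_eq
  

/-! ### theta sum -/

lemma summable_theta (hq0 : 0 < q) (hq1 : q < 1) : Summable (fun m : ℤ => θ q m) := by
  have hqne : q ≠ 0 := ne_of_gt hq0
  apply Summable.of_nat_of_neg
  · refine Summable.of_nonneg_of_le (fun n => (zpow_pos hq0 _).le) (fun n => ?_)
      ((summable_geometric_of_lt_one hq0.le hq1).mul_left q⁻¹)
    have h := half_mul (n : ℤ)
    have hexp : ((n:ℤ) - 1) ≤ (n:ℤ) * ((n:ℤ) - 1) / 2 := by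
      rcases Nat.lt_or_ge n 2 with h2 | h2
      · interval_cases n <;> decide
      · have h2' : (2:ℤ) ≤ (n:ℤ) := by exact_mod_cast h2
        have h3 : (0:ℤ) ≤ ((n:ℤ) - 1) * ((n:ℤ) - 2) :=
          mul_nonneg (by linarith) (by linarith)
        have h4 : ((n:ℤ) - 1) * ((n:ℤ) - 2) = (n:ℤ) * ((n:ℤ) - 1) - 2 * ((n:ℤ) - 1) := by ring
        linarith
    calc θ q (n : ℤ) ≤ q ^ ((n:ℤ) - 1) :=
          zpow_le_zpow_right_of_le_one₀ hq0 hq1.le hexp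
      _ = q⁻¹ * q ^ n := by
          rw [zpow_sub₀ hqne, zpow_natCast, zpow_one, div_eq_inv_mul]
  · refine Summable.of_nonneg_of_le (fun n => (zpow_pos hq0 _).le) (fun n => ?_)
      (summable_geometric_of_lt_one hq0.le hq1)
    have h := half_mul (-(n : ℤ))
    have hexp : ((n:ℤ)) ≤ (-(n:ℤ)) * ((-(n:ℤ)) - 1) / 2 := by
      rcases Nat.lt_or_ge n 1 with h2 | h2
      · interval_cases n <;> decide
      · have h2' : (1:ℤ) ≤ (n:ℤ) := by exact_mod_cast h2
        have h3 : (0:ℤ) ≤ (n:ℤ) * ((n:ℤ) - 1) :=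
          mul_nonneg (by linarith) (by linarith)
        have h4 : (-(n:ℤ)) * ((-(n:ℤ)) - 1) = (n:ℤ) * ((n:ℤ) - 1) + 2 * (n:ℤ) := by ring
        linarith
    calc θ q (-(n : ℤ)) ≤ q ^ ((n:ℤ)) :=
          zpow_le_zpow_right_of_le_one₀ hq0 hq1.le hexp
      _ = q ^ n := zpow_natCast q n

lemma theta_tsum_pos (hq0 : 0 < q) (hq1 : q < 1) : 0 < ∑' m : ℤ, θ q m :=
  Summable.tsum_pos (summable_theta hq0 hq1) (fun m => (zpow_pos hq0 _).le) 0
    (by rw [θ_zero]; norm_num)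

end CdfAux
end CdfAux

open CdfAux in
/-- Lemma 2.4 of [IMS]: if `S` is Theta(1/√q; q)-distributed on `ℤ`
and `χ` is independent `q`-Geometric on `ℤ_{≥0}`, then
`P(χ + S ≤ n) = ∏_{i=0}^∞ 1/(1 + q^{n+i})`. -/
theorem cdf_chi_plus_S (q : ℝ) (hq : q ∈ Set.Ioo (0:ℝ) 1)
    {Ω : Type*} [MeasurableSpace Ω] (P : Measure Ω) [IsProbabilityMeasure P]
    (S : Ω → ℤ) (χ : Ω → ℕ) (hSm : Measurable S) (hχm : Measurable χ)
    (hindep : IndepFun S χ P)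
    (hS : ∀ k : ℤ, (P {ω | S ω = k}).toReal
      = q ^ (k * (k - 1) / 2) / (∑' m : ℤ, q ^ (m * (m - 1) / 2)))
    (hχ : ∀ k : ℕ, (P {ω | χ ω = k}).toReal
      = (∏' j : ℕ, (1 - q ^ (j + k + 1))) - (∏' j : ℕ, (1 - q ^ (j + k)))) :
    ∀ n : ℤ, (P {ω | (χ ω : ℤ) + S ω ≤ n}).toReal
      = ∏' i : ℕ, 1 / (1 + q ^ (n + i)) := by
  obtain ⟨hq0, hq1⟩ := hq
  have hqne : q ≠ 0 := ne_of_gt hq0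
  set Θ : ℝ := ∑' m : ℤ, q ^ (m * (m - 1) / 2) with hΘdef
  have hΘpos : 0 < Θ := theta_tsum_pos hq0 hq1
  have hχ' : ∀ k : ℕ, (P {ω | χ ω = k}).toReal = Pinf q (k+1) - Pinf q k := fun k => hχ k
  -- CDF of χ
  have hccdf : ∀ M : ℕ, (P (χ ⁻¹' {k | k ≤ M})).toReal = Pinf q (M+1) := by
    intro M
    induction M with
    | zero =>
        have hset : (χ ⁻¹' {k | k ≤ 0}) = {ω | χ ω = 0} := by
          ext ω; simp [Nat.le_zero]
        rw [hset, hχ' 0, Pinf_zero, sub_zero]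
    | succ M ih =>
        have hset : (χ ⁻¹' {k | k ≤ M + 1}) = (χ ⁻¹' {k | k ≤ M}) ∪ {ω | χ ω = M + 1} := by
          ext ω
          simp only [Set.mem_preimage, Set.mem_setOf_eq, Set.mem_union]
          omega
        have hdisj : Disjoint (χ ⁻¹' {k | k ≤ M}) {ω | χ ω = M + 1} := by
          refine Set.disjoint_left.2 ?_
          intro ω h1 h2
          simp only [Set.mem_preimage, Set.mem_setOf_eq] at h1 h2
          omega
        have hmeas : MeasurableSet {ω | χ ω = M + 1} := hχm (measurableSet_singleton (M+1))
        rw [hset, measure_union hdisj hmeas,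
          ENNReal.toReal_add (measure_ne_top P _) (measure_ne_top P _), ih, hχ' (M+1)]
        ring
  -- key formula
  have key : ∀ n : ℤ, (P {ω | (χ ω : ℤ) + S ω ≤ n}).toReal
      = (Pinf q 1 * θ q n / Θ) * Efun q (q ^ (1 - n)) := by
    intro n
    have hsets : ∀ j : ℤ, MeasurableSet (S ⁻¹' {j} ∩ χ ⁻¹' {k : ℕ | (k:ℤ) ≤ n - j}) := fun j =>
      (hSm (measurableSet_singleton j)).inter (hχm (Set.to_countable _).measurableSet)
    have hdecomp : {ω | (χ ω : ℤ) + S ω ≤ n}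
        = ⋃ j : ℤ, (S ⁻¹' {j} ∩ χ ⁻¹' {k : ℕ | (k:ℤ) ≤ n - j}) := by
      ext ω
      simp only [Set.mem_setOf_eq, Set.mem_iUnion, Set.mem_inter_iff, Set.mem_preimage,
        Set.mem_singleton_iff]
      constructor
      · intro h; exact ⟨S ω, rfl, by omega⟩
      · rintro ⟨j, hj, hk⟩; omega
    have hdisj : Pairwise (Function.onFun Disjoint
        (fun j : ℤ => S ⁻¹' {j} ∩ χ ⁻¹' {k : ℕ | (k:ℤ) ≤ n - j})) := by
      intro i j hij
      refine Set.disjoint_left.2 ?_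
      rintro ω ⟨hi, -⟩ ⟨hj, -⟩
      exact hij (hi.symm.trans hj)
    rw [hdecomp, measure_iUnion hdisj hsets,
      ENNReal.tsum_toReal_eq (fun j => measure_ne_top P _)]
    have hterm : ∀ j : ℤ, (P (S ⁻¹' {j} ∩ χ ⁻¹' {k : ℕ | (k:ℤ) ≤ n - j})).toReal
        = (P (S ⁻¹' {j})).toReal * (P (χ ⁻¹' {k : ℕ | (k:ℤ) ≤ n - j})).toReal := by
      intro j
      rw [hindep.measure_inter_preimage_eq_mul _ _ (measurableSet_singleton j)
        (Set.to_countable _).measurableSet, ENNReal.toReal_mul]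
    rw [tsum_congr hterm]
    set g : ℤ → ℝ := fun j =>
      (P (S ⁻¹' {j})).toReal * (P (χ ⁻¹' {k : ℕ | (k:ℤ) ≤ n - j})).toReal with hgdef
    have hinj : Function.Injective (fun k : ℕ => n - (k:ℤ)) := by
      intro a b h
      simp only at h
      omega
    have hsupp : Function.support g ⊆ Set.range (fun k : ℕ => n - (k:ℤ)) := by
      intro j hj
      by_contra hjr
      apply hj
      have hjn : n < j := by
        by_contra hle
        push_neg at hle
        exact hjr ⟨(n - j).toNat, by simp; omega⟩
      have hempty : {k : ℕ | (k:ℤ) ≤ n - j} = ∅ := by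
        ext k
        simp only [Set.mem_setOf_eq, Set.mem_empty_iff_false, iff_false, not_le]
        omega
      rw [hgdef]
      simp only [hempty]
      simp
    have hre := Function.Injective.tsum_eq hinj hsupp
    rw [← hre]
    have hterm2 : ∀ k : ℕ, g (n - (k:ℤ))
        = (Pinf q 1 * θ q n / Θ) * ee q (q ^ (1 - n)) k := by
      intro k
      have hps : (P (S ⁻¹' {n - (k:ℤ)})).toReal = θ q (n - (k:ℤ)) / Θ := hS (n - (k:ℤ))
      have hset2 : {k' : ℕ | (k':ℤ) ≤ n - (n - (k:ℤ))} = {k' : ℕ | k' ≤ k} := by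
        ext k'
        simp only [Set.mem_setOf_eq]
        omega
      have hpc : (P (χ ⁻¹' {k' : ℕ | (k':ℤ) ≤ n - (n - (k:ℤ))})).toReal = Pinf q (k+1) := by
        rw [hset2]; exact hccdf k
      rw [hgdef]
      simp only
      rw [hps, hpc]
      have hsplit := Pinf_split (q := q) hq0 hq1 k
      have hθs := θ_shift hqne n k
      have hpk := pk_pos hq0 hq1 k
      rw [CdfAux.ee, hθs, hsplit]
      field_simp
    rw [tsum_congr hterm2, tsum_mul_left]
    rfl
  -- recursion
  set F : ℤ → ℝ := fun n => (P {ω | (χ ω : ℤ) + S ω ≤ n}).toReal with hFdef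
  have hrec : ∀ n : ℤ, F (n+1) = (1 + q ^ n) * F n := by
    intro n
    rw [hFdef]
    simp only
    rw [key (n+1), key n]
    have h1 : θ q (n+1) = θ q n * q ^ n := θ_succ hqne n
    have h2 : (1 : ℤ) - (n+1) = -n := by ring
    have h4 : q * q ^ (-n) = q ^ (1 - n) := by
      rw [show (1 : ℤ) - n = 1 + (-n) by ring, zpow_add₀ hqne, zpow_one]
    have h3 : Efun q (q ^ (-n)) = (1 + q ^ (-n)) * Efun q (q ^ (1 - n)) := by
      rw [← h4]
      exact Efun_eq hq0 hq1 _
    have huv : q ^ n * q ^ (-n) = 1 := by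
      rw [← zpow_add₀ hqne]
      simp
    have keyeq : q ^ n * (1 + q ^ (-n)) = 1 + q ^ n := by
      rw [mul_add, mul_one, huv]
      ring
    rw [h2, h1, h3]
    calc Pinf q 1 * (θ q n * q ^ n) / Θ * ((1 + q ^ (-n)) * Efun q (q ^ (1 - n)))
        = (q ^ n * (1 + q ^ (-n))) * (Pinf q 1 * θ q n / Θ * Efun q (q ^ (1 - n))) := by ring
      _ = (1 + q ^ n) * (Pinf q 1 * θ q n / Θ * Efun q (q ^ (1 - n))) := by rw [keyeq]
  -- constancy of F n * B n
  have hstep : ∀ n : ℤ, F (n+1) * B q (n+1) = F n * B q n := by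
    intro n
    rw [hrec n, B_peel hq0 hq1 n]
    ring
  have hg : ∀ n : ℤ, F n * B q n = F 0 * B q 0 := by
    intro n
    induction n using Int.induction_on with
    | zero => rfl
    | succ k ih => rw [hstep (k:ℤ), ih]
    | pred k ih =>
        have h := hstep (-(k:ℤ) - 1)
        rw [show (-(k:ℤ) - 1 + 1) = -(k:ℤ) by ring] at h
        exact h.symm.trans ih
  -- limits
  have hFlim : Filter.Tendsto F Filter.atTop (nhds 1) := by
    have hmono : Monotone (fun n : ℤ => {ω | (χ ω : ℤ) + S ω ≤ n}) := by
      intro a b hab ω hω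
      simp only [Set.mem_setOf_eq] at hω ⊢
      omega
    have hU : ⋃ n : ℤ, {ω | (χ ω : ℤ) + S ω ≤ n} = Set.univ := by
      ext ω
      simp only [Set.mem_iUnion, Set.mem_setOf_eq, Set.mem_univ, iff_true]
      exact ⟨(χ ω : ℤ) + S ω, le_refl _⟩
    have ht := tendsto_measure_iUnion_atTop (μ := P) hmono
    rw [hU, measure_univ] at ht
    have := (ENNReal.tendsto_toReal_iff (fun n => measure_ne_top P _) ENNReal.one_ne_top).2 ht
    simpa using this
  have hBlim := B_tendsto hq0 hq1
  have hprod : Filter.Tendsto (fun n : ℤ => F n * B q n) Filter.atTop (nhds 1) := by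
    simpa using hFlim.mul hBlim
  have hconst : Filter.Tendsto (fun n : ℤ => F n * B q n) Filter.atTop (nhds (F 0 * B q 0)) := by
    have heq : (fun n : ℤ => F n * B q n) = fun _ => F 0 * B q 0 := funext hg
    rw [heq]
    exact tendsto_const_nhds
  have h1 : F 0 * B q 0 = 1 := tendsto_nhds_unique hconst hprod
  intro n
  have h2 : F n * B q n = 1 := (hg n).trans h1
  have hBpos := B_pos hq0 hq1 n
  have hFn : F n = 1 / B q n := by
    field_simp
    linarith [h2]
  have : (P {ω | (χ ω : ℤ) + S ω ≤ n}).toReal = F n := rfl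
  rw [this, hFn, ← B_inv hq0 hq1 n]
end

section
/- Let F : ℝ → [0,∞) be a non-decreasing function, and suppose for some sequence Φ_N of functions and g(x) = η x²/2 (η>0), F(s) = lim_N inf_{y} { g(y) + Φ_N(s-y) } for all s, where each Φ_N is non-decreasing with Φ_N(0)=0 and Φ_N(s)=∞ for s>1, Φ_N bounded uniformly on (-∞,1], and the Φ_N satisfy approximate midpoint convexity: for all ε>0 there is N_ε such that for N ≥ N_ε and all v1, v2, (Φ_N(v1)+Φ_N(v2))/2 + ε ≥ Φ_N((v1+v2)/2 − N^{-1/6}). Then F is midpoint convex, hence (being non-decreasing and real-valued) convex. -/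
open Filter Topology ENNReal

private lemma dyadic_step (F : ℝ → ℝ) (p q : ℝ)
    (hmid : ∀ a b : ℝ, F ((a + b) / 2) ≤ (F a + F b) / 2) :
    ∀ n : ℕ, ∀ k : ℕ, k ≤ 2 ^ n →
      F (p + ((k : ℝ) / 2 ^ n) * (q - p)) ≤ F p + ((k : ℝ) / 2 ^ n) * (F q - F p) := by
  intro n
  induction n with
  | zero =>
    intro k hk
    interval_cases k
    · norm_num
    · norm_num
  | succ n ih =>
    intro k hk
    rcases Nat.even_or_odd k with ⟨j, hj⟩ | ⟨j, hj⟩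
    · subst hj
      have hj2 : j ≤ 2 ^ n := by
        have : 2 ^ (n + 1) = 2 ^ n + 2 ^ n := by ring
        omega
      have hcast : ((j + j : ℕ) : ℝ) / 2 ^ (n + 1) = (j : ℝ) / 2 ^ n := by
        push_cast
        field_simp
        ring
      rw [hcast]
      exact ih j hj2
    · subst hj
      have hj1 : j ≤ 2 ^ n := by
        have : 2 ^ (n + 1) = 2 ^ n + 2 ^ n := by ring
        omega
      have hj2 : j + 1 ≤ 2 ^ n := by
        have : 2 ^ (n + 1) = 2 ^ n + 2 ^ n := by ring
        omega
      have h1 := ih j hj1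
      have h2 := ih (j + 1) hj2
      push_cast at h1 h2
      have hpt : p + ((2 * j + 1 : ℕ) : ℝ) / 2 ^ (n + 1) * (q - p)
          = ((p + ((j : ℝ) / 2 ^ n) * (q - p)) + (p + (((j : ℝ) + 1) / 2 ^ n) * (q - p))) / 2 := by
        push_cast
        field_simp
        ring
      rw [hpt]
      calc F _ ≤ (F (p + ((j : ℝ) / 2 ^ n) * (q - p)) + F (p + (((j : ℝ) + 1) / 2 ^ n) * (q - p))) / 2 :=
            hmid _ _
        _ ≤ ((F p + ((j : ℝ) / 2 ^ n) * (F q - F p)) + (F p + (((j : ℝ) + 1) / 2 ^ n) * (F q - F p))) / 2 := by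
            linarith
        _ = F p + ((2 * j + 1 : ℕ) : ℝ) / 2 ^ (n + 1) * (F q - F p) := by
            push_cast
            field_simp
            ring

private lemma midpoint_mono_convex (F : ℝ → ℝ) (hFmono : Monotone F)
    (hmid : ∀ a b : ℝ, F ((a + b) / 2) ≤ (F a + F b) / 2) :
    ConvexOn ℝ Set.univ F := by
  have key : ∀ p q : ℝ, p ≤ q → ∀ t : ℝ, 0 ≤ t → t ≤ 1 →
      F (p + t * (q - p)) ≤ F p + t * (F q - F p) := by
    intro p q hpq t ht0 ht1
    have hd : 0 ≤ F q - F p := by linarith [hFmono hpq]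
    refine le_of_forall_pos_le_add ?_
    intro ε hε
    obtain ⟨n, hn⟩ : ∃ n : ℕ, (F q - F p) / ε < 2 ^ n := pow_unbounded_of_one_lt _ one_lt_two
    have h2n : (0:ℝ) < 2 ^ n := by positivity
    set k : ℕ := ⌈t * 2 ^ n⌉₊ with hk
    have hkle : k ≤ 2 ^ n := by
      rw [hk]
      refine Nat.ceil_le.mpr ?_
      push_cast
      nlinarith
    have htk : t ≤ (k : ℝ) / 2 ^ n := by
      rw [le_div_iff₀ h2n]
      exact Nat.le_ceil _
    have hkt : (k : ℝ) / 2 ^ n ≤ t + 1 / 2 ^ n := by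
      rw [div_le_iff₀ h2n]
      have := Nat.ceil_lt_add_one (by positivity : (0:ℝ) ≤ t * 2 ^ n)
      calc (k : ℝ) ≤ t * 2 ^ n + 1 := le_of_lt this
        _ = (t + 1 / 2 ^ n) * 2 ^ n := by field_simp
    have hF1 : F (p + t * (q - p)) ≤ F (p + ((k : ℝ) / 2 ^ n) * (q - p)) := by
      apply hFmono
      nlinarith
    have hF2 := dyadic_step F p q hmid n k hkle
    rw [div_lt_iff₀ hε] at hn
    have hcb : (1 / 2 ^ n) * (F q - F p) ≤ ε := by
      rw [div_mul_eq_mul_div, one_mul, div_le_iff₀ h2n]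
      nlinarith
    calc F (p + t * (q - p)) ≤ F p + ((k : ℝ) / 2 ^ n) * (F q - F p) := le_trans hF1 hF2
      _ ≤ F p + (t + 1 / 2 ^ n) * (F q - F p) := by nlinarith
      _ ≤ F p + t * (F q - F p) + ε := by nlinarith
  refine ⟨convex_univ, ?_⟩
  intro p _ q _ a b ha hb hab
  have ha' : a = 1 - b := by linarith
  rcases le_total p q with hpq | hqp
  · have := key p q hpq b hb (by linarith)
    have e1 : a • p + b • q = p + b * (q - p) := by simp only [smul_eq_mul]; rw [ha']; ring
    have e2 : a • F p + b • F q = F p + b * (F q - F p) := by simp only [smul_eq_mul]; rw [ha']; ring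
    rw [e1, e2]
    exact this
  · have := key q p hqp a ha (by linarith)
    have e1 : a • p + b • q = q + a * (p - q) := by simp only [smul_eq_mul]; rw [ha']; ring
    have e2 : a • F p + b • F q = F q + a * (F p - F q) := by simp only [smul_eq_mul]; rw [ha']; ring
    rw [e1, e2]
    exact this

set_option maxHeartbeats 1000000 in
private lemma rate_midpoint_ineq (η : ℝ) (hη : 0 < η) (F : ℝ → ℝ)
    (hFnn : ∀ s, 0 ≤ F s) (hFmono : Monotone F)
    (Φ : ℕ → ℝ → ℝ≥0∞)
    (hmono : ∀ N, Monotone (Φ N))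
    (h0 : ∀ N, Φ N 0 = 0)
    (hmid : ∀ ε > (0:ℝ), ∃ N0 : ℕ, ∀ N ≥ N0, ∀ v1 v2 : ℝ,
      Φ N ((v1 + v2) / 2 - (N:ℝ) ^ (-(1:ℝ)/6))
        ≤ (Φ N v1 + Φ N v2) / 2 + ENNReal.ofReal ε)
    (hlim : ∀ s : ℝ, Tendsto
      (fun N => ⨅ y : ℝ, ENNReal.ofReal (η * y^2 / 2) + Φ N (s - y))
      atTop (𝓝 (ENNReal.ofReal (F s)))) :
    ∀ x x' : ℝ, F ((x + x') / 2) ≤ (F x + F x') / 2 := by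
  intro x x'
  set I : ℕ → ℝ → ℝ≥0∞ := fun N s => ⨅ y : ℝ, ENNReal.ofReal (η * y ^ 2 / 2) + Φ N (s - y)
    with hIdef
  have hlim' : ∀ s, Tendsto (fun N => I N s) atTop (𝓝 (ENNReal.ofReal (F s))) := fun s => hlim s
  have hIle : ∀ N s, I N s ≤ ENNReal.ofReal (η * s ^ 2 / 2) := by
    intro N s
    have h := iInf_le (fun y => ENNReal.ofReal (η * y ^ 2 / 2) + Φ N (s - y)) s
    simpa [h0 N] using h
  have hItop : ∀ N s, I N s ≠ ⊤ := fun N s => (lt_of_le_of_lt (hIle N s) ofReal_lt_top).ne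
  obtain ⟨m, hm⟩ : ∃ m : ℝ, m = (x + x') / 2 := ⟨_, rfl⟩
  rw [← hm]
  refine le_of_forall_pos_le_add ?_
  intro ε' hε'
  obtain ⟨ε, hεdef⟩ : ∃ ε : ℝ, ε = ε' / 8 := ⟨_, rfl⟩
  have hεpos : 0 < ε := by rw [hεdef]; linarith
  obtain ⟨B, hBdef⟩ : ∃ B : ℝ, B = |m| + 1 + Real.sqrt (2 * ε / η) := ⟨_, rfl⟩
  have hB1 : 1 ≤ B := by
    have h1 := abs_nonneg m
    have h2 := Real.sqrt_nonneg (2 * ε / η)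
    rw [hBdef]; linarith
  have hB0 : 0 ≤ B := by linarith
  obtain ⟨K, hKdef⟩ : ∃ K : ℝ, K = η * (B + 1 / 2) := ⟨_, rfl⟩
  have hKpos : 0 < K := by rw [hKdef]; exact mul_pos hη (by linarith)
  obtain ⟨δ, hδdef⟩ : ∃ δ : ℝ, δ = min 1 (ε' / (2 * K)) := ⟨_, rfl⟩
  have hδpos : 0 < δ := by rw [hδdef]; exact lt_min one_pos (by positivity)
  have hδ1 : δ ≤ 1 := by rw [hδdef]; exact min_le_left _ _
  have hδ2 : δ ≤ ε' / (2 * K) := by rw [hδdef]; exact min_le_right _ _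
  obtain ⟨C, hCdef⟩ : ∃ C : ℝ, C = 4 * ε + δ * K := ⟨_, rfl⟩
  have hCnn : 0 ≤ C := by rw [hCdef]; positivity
  have hCle : C ≤ ε' := by
    have h1 : δ * K ≤ (ε' / (2 * K)) * K := mul_le_mul_of_nonneg_right hδ2 hKpos.le
    have h2 : (ε' / (2 * K)) * K = ε' / 2 := by field_simp
    rw [hCdef, hεdef]; rw [h2] at h1; linarith
  obtain ⟨N0, hN0⟩ := hmid ε hεpos
  have hδN : ∀ᶠ N : ℕ in atTop, (N : ℝ) ^ (-(1:ℝ)/6) < δ := by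
    have h1 : Tendsto (fun N : ℕ => (N : ℝ) ^ (-(1:ℝ)/6)) atTop (𝓝 0) := by
      have h2 := (tendsto_rpow_neg_atTop (by norm_num : (0:ℝ) < 1/6)).comp
        (tendsto_natCast_atTop_atTop (R := ℝ))
      simpa [Function.comp_def, neg_div] using h2
    exact h1.eventually_lt_const hδpos
  -- the main eventual estimate
  have hev : ∀ᶠ N in atTop, I N m ≤ (I N x + I N x') / 2 + ENNReal.ofReal C := by
    filter_upwards [eventually_ge_atTop N0, hδN] with N hN hdδ'
    obtain ⟨d, hddef⟩ : ∃ d : ℝ, d = (N : ℝ) ^ (-(1:ℝ)/6) := ⟨_, rfl⟩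
    rw [← hddef] at hdδ'
    have hd0 : 0 ≤ d := by rw [hddef]; exact Real.rpow_nonneg (Nat.cast_nonneg N) _
    have hdδ : d ≤ δ := hdδ'.le
    have hd1 : d ≤ 1 := le_trans hdδ hδ1
    have hsel : ∀ s : ℝ, ∃ y : ℝ,
        ENNReal.ofReal (η * y ^ 2 / 2) + Φ N (s - y) < I N s + ENNReal.ofReal ε := by
      intro s
      have h1 : I N s < I N s + ENNReal.ofReal ε :=
        ENNReal.lt_add_right (hItop N s) (ENNReal.ofReal_pos.mpr hεpos).ne'
      exact iInf_lt_iff.mp h1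
    obtain ⟨y1, hy1⟩ := hsel x
    obtain ⟨y2, hy2⟩ := hsel x'
    obtain ⟨z, hz⟩ := hsel (m - d)
    -- step 2 : midpoint estimate for I N (m - d)
    have hmid2 := hN0 N hN (x - y1) (x' - y2)
    rw [← hddef] at hmid2
    have hgconv : ENNReal.ofReal (η * ((y1 + y2) / 2) ^ 2 / 2)
        ≤ (ENNReal.ofReal (η * y1 ^ 2 / 2) + ENNReal.ofReal (η * y2 ^ 2 / 2)) / 2 := by
      have heq : ENNReal.ofReal ((η * y1 ^ 2 / 2 + η * y2 ^ 2 / 2) / 2)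
          = (ENNReal.ofReal (η * y1 ^ 2 / 2) + ENNReal.ofReal (η * y2 ^ 2 / 2)) / 2 := by
        rw [ENNReal.ofReal_div_of_pos (by norm_num : (0:ℝ) < 2),
          ENNReal.ofReal_add (by positivity) (by positivity)]
        norm_num
      rw [← heq]
      exact ENNReal.ofReal_le_ofReal (by nlinarith [sq_nonneg (y1 - y2), hη.le])
    have harg : (m - d) - (y1 + y2) / 2 = ((x - y1) + (x' - y2)) / 2 - d := by
      rw [hm]; ring
    have hee : ENNReal.ofReal ε + ENNReal.ofReal ε + ENNReal.ofReal ε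
        = ENNReal.ofReal (3 * ε) := by
      rw [← ENNReal.ofReal_add hεpos.le hεpos.le,
        ← ENNReal.ofReal_add (by linarith) hεpos.le]
      congr 1
      ring
    have hstep2 : I N (m - d) ≤ (I N x + I N x') / 2 + ENNReal.ofReal (3 * ε) := by
      calc I N (m - d)
          ≤ ENNReal.ofReal (η * ((y1 + y2) / 2) ^ 2 / 2)
              + Φ N ((m - d) - (y1 + y2) / 2) :=
            iInf_le (fun y => ENNReal.ofReal (η * y ^ 2 / 2) + Φ N ((m - d) - y)) ((y1 + y2) / 2)
        _ = ENNReal.ofReal (η * ((y1 + y2) / 2) ^ 2 / 2)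
              + Φ N (((x - y1) + (x' - y2)) / 2 - d) := by rw [harg]
        _ ≤ (ENNReal.ofReal (η * y1 ^ 2 / 2) + ENNReal.ofReal (η * y2 ^ 2 / 2)) / 2
              + ((Φ N (x - y1) + Φ N (x' - y2)) / 2 + ENNReal.ofReal ε) :=
            add_le_add hgconv hmid2
        _ = ((ENNReal.ofReal (η * y1 ^ 2 / 2) + Φ N (x - y1))
              + (ENNReal.ofReal (η * y2 ^ 2 / 2) + Φ N (x' - y2))) / 2 + ENNReal.ofReal ε := by
            rw [← add_assoc, ENNReal.div_add_div_same]
            have hre : (ENNReal.ofReal (η * y1 ^ 2 / 2) + ENNReal.ofReal (η * y2 ^ 2 / 2))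
                + (Φ N (x - y1) + Φ N (x' - y2))
                = (ENNReal.ofReal (η * y1 ^ 2 / 2) + Φ N (x - y1))
                + (ENNReal.ofReal (η * y2 ^ 2 / 2) + Φ N (x' - y2)) := by abel
            rw [hre]
        _ ≤ ((I N x + ENNReal.ofReal ε) + (I N x' + ENNReal.ofReal ε)) / 2 + ENNReal.ofReal ε :=
            add_le_add (ENNReal.div_le_div_right (add_le_add hy1.le hy2.le) 2) le_rfl
        _ = ((I N x + I N x') + (ENNReal.ofReal ε + ENNReal.ofReal ε)) / 2
              + ENNReal.ofReal ε := by
            have hre : (I N x + ENNReal.ofReal ε) + (I N x' + ENNReal.ofReal ε)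
                = (I N x + I N x') + (ENNReal.ofReal ε + ENNReal.ofReal ε) := by abel
            rw [hre]
        _ = (I N x + I N x') / 2
              + ((ENNReal.ofReal ε + ENNReal.ofReal ε) / 2 + ENNReal.ofReal ε) := by
            rw [← ENNReal.div_add_div_same, add_assoc]
        _ ≤ (I N x + I N x') / 2 + ENNReal.ofReal (3 * ε) := by
            refine add_le_add le_rfl ?_
            calc (ENNReal.ofReal ε + ENNReal.ofReal ε) / 2 + ENNReal.ofReal ε
                ≤ (ENNReal.ofReal ε + ENNReal.ofReal ε) + ENNReal.ofReal ε :=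
                  add_le_add ENNReal.half_le_self le_rfl
              _ = ENNReal.ofReal (3 * ε) := hee
    -- step 3 : bound on the near-optimal point z and the shift estimate
    have hzg : ENNReal.ofReal (η * z ^ 2 / 2) ≤ I N (m - d) + ENNReal.ofReal ε :=
      le_trans le_self_add hz.le
    have hzR : η * z ^ 2 / 2 ≤ η * (m - d) ^ 2 / 2 + ε := by
      have h4 : I N (m - d) + ENNReal.ofReal ε
          ≤ ENNReal.ofReal (η * (m - d) ^ 2 / 2 + ε) := by
        rw [ENNReal.ofReal_add (by positivity) hεpos.le]
        exact add_le_add (hIle N (m - d)) le_rfl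
      exact (ENNReal.ofReal_le_ofReal_iff (by positivity)).mp (le_trans hzg h4)
    have hzB : z ≤ B := by
      have hs0 : (m - d) ^ 2 ≤ (|m| + 1) ^ 2 := by
        nlinarith [le_abs_self m, neg_abs_le m, abs_nonneg m, hd0, hd1,
          mul_le_mul_of_nonneg_right (neg_abs_le m) hd0,
          mul_le_mul_of_nonneg_left hd1 (abs_nonneg m),
          mul_le_mul_of_nonneg_left hd1 hd0, sq_abs m]
      have hsq : Real.sqrt (2 * ε / η) ^ 2 = 2 * ε / η := Real.sq_sqrt (by positivity)
      have hc : 2 * ε / η * η = 2 * ε := by field_simp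
      have h5 : z ^ 2 ≤ (m - d) ^ 2 + 2 * ε / η := by nlinarith [hzR, hη, hc]
      have hz2 : z ^ 2 ≤ B ^ 2 := by
        have h6 : (|m| + 1) ^ 2 + 2 * ε / η ≤ B ^ 2 := by
          rw [hBdef]
          nlinarith [Real.sqrt_nonneg (2 * ε / η), abs_nonneg m, hsq]
        linarith
      calc z ≤ |z| := le_abs_self z
        _ = Real.sqrt (z ^ 2) := (Real.sqrt_sq_eq_abs z).symm
        _ ≤ Real.sqrt (B ^ 2) := Real.sqrt_le_sqrt hz2
        _ = B := Real.sqrt_sq hB0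
    have h6 : ENNReal.ofReal (η * (z + d) ^ 2 / 2)
        ≤ ENNReal.ofReal (η * z ^ 2 / 2) + ENNReal.ofReal (δ * K) := by
      rw [← ENNReal.ofReal_add (by positivity) (by positivity)]
      apply ENNReal.ofReal_le_ofReal
      rw [hKdef]
      have f1 : η * d * z ≤ η * d * B :=
        mul_le_mul_of_nonneg_left hzB (mul_nonneg hη.le hd0)
      have f2 : η * d * B ≤ η * δ * B :=
        mul_le_mul_of_nonneg_right (mul_le_mul_of_nonneg_left hdδ hη.le) hB0
      have f3 : η * (d * d) ≤ η * (δ * 1) :=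
        mul_le_mul_of_nonneg_left (mul_le_mul hdδ hd1 hd0 hδpos.le) hη.le
      nlinarith [f1, f2, f3]
    have harg2 : m - (z + d) = (m - d) - z := by ring
    have hstep3 : I N m ≤ I N (m - d) + ENNReal.ofReal ε + ENNReal.ofReal (δ * K) := by
      calc I N m ≤ ENNReal.ofReal (η * (z + d) ^ 2 / 2) + Φ N (m - (z + d)) :=
            iInf_le (fun y => ENNReal.ofReal (η * y ^ 2 / 2) + Φ N (m - y)) (z + d)
        _ = ENNReal.ofReal (η * (z + d) ^ 2 / 2) + Φ N ((m - d) - z) := by rw [harg2]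
        _ ≤ (ENNReal.ofReal (η * z ^ 2 / 2) + ENNReal.ofReal (δ * K)) + Φ N ((m - d) - z) :=
            add_le_add h6 le_rfl
        _ = (ENNReal.ofReal (η * z ^ 2 / 2) + Φ N ((m - d) - z)) + ENNReal.ofReal (δ * K) := by
            abel
        _ ≤ (I N (m - d) + ENNReal.ofReal ε) + ENNReal.ofReal (δ * K) :=
            add_le_add hz.le le_rfl
    calc I N m ≤ I N (m - d) + ENNReal.ofReal ε + ENNReal.ofReal (δ * K) := hstep3
      _ ≤ ((I N x + I N x') / 2 + ENNReal.ofReal (3 * ε)) + ENNReal.ofReal ε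
            + ENNReal.ofReal (δ * K) := add_le_add (add_le_add hstep2 le_rfl) le_rfl
      _ = (I N x + I N x') / 2
            + (ENNReal.ofReal (3 * ε) + ENNReal.ofReal ε + ENNReal.ofReal (δ * K)) := by abel
      _ = (I N x + I N x') / 2 + ENNReal.ofReal C := by
          rw [← ENNReal.ofReal_add (by linarith) hεpos.le,
            ← ENNReal.ofReal_add (by linarith) (by positivity)]
          congr 1
          rw [hCdef]
          ring
  -- pass to the limit
  have hR : Tendsto (fun N => (I N x + I N x') / 2 + ENNReal.ofReal C) atTop
      (𝓝 ((ENNReal.ofReal (F x) + ENNReal.ofReal (F x')) / 2 + ENNReal.ofReal C)) := by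
    have h1 := ENNReal.Tendsto.div_const ((hlim' x).add (hlim' x')) (Or.inr (two_ne_zero))
    exact h1.add tendsto_const_nhds
  have hfinal := le_of_tendsto_of_tendsto (hlim' m) hR hev
  have hFx2 : 0 ≤ (F x + F x') / 2 := by have := hFnn x; have := hFnn x'; positivity
  have hrhs : ENNReal.ofReal ((F x + F x') / 2 + C)
      = (ENNReal.ofReal (F x) + ENNReal.ofReal (F x')) / 2 + ENNReal.ofReal C := by
    rw [ENNReal.ofReal_add hFx2 hCnn, ENNReal.ofReal_div_of_pos (by norm_num : (0:ℝ) < 2),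
      ENNReal.ofReal_add (hFnn x) (hFnn x')]
    norm_num
  rw [← hrhs] at hfinal
  have hreal : F m ≤ (F x + F x') / 2 + C :=
    (ENNReal.ofReal_le_ofReal_iff (by linarith)).mp hfinal
  linarith


/-- abstracting Proposition 4.4: if `F` is the pointwise limit of the
infimal convolutions `g ⊕ Φ_N` with `g(y) = η y²/2`, where the `Φ_N` are non-decreasing,
vanish at `0`, are `∞` above `1`, uniformly bounded on `(-∞,1]`, and approximately
midpoint convex, then `F` is convex. -/
theorem rate_function_convex (η : ℝ) (hη : 0 < η) (F : ℝ → ℝ)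
    (hFnn : ∀ s, 0 ≤ F s) (hFmono : Monotone F)
    (Φ : ℕ → ℝ → ℝ≥0∞)
    (hmono : ∀ N, Monotone (Φ N))
    (h0 : ∀ N, Φ N 0 = 0)
    (htop : ∀ N, ∀ s : ℝ, 1 < s → Φ N s = ⊤)
    (hbd : ∃ M : ℝ, ∀ N, ∀ s : ℝ, s ≤ 1 → Φ N s ≤ ENNReal.ofReal M)
    (hmid : ∀ ε > (0:ℝ), ∃ N0 : ℕ, ∀ N ≥ N0, ∀ v1 v2 : ℝ,
      Φ N ((v1 + v2) / 2 - (N:ℝ) ^ (-(1:ℝ)/6))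
        ≤ (Φ N v1 + Φ N v2) / 2 + ENNReal.ofReal ε)
    (hlim : ∀ s : ℝ, Tendsto
      (fun N => ⨅ y : ℝ, ENNReal.ofReal (η * y^2 / 2) + Φ N (s - y))
      atTop (𝓝 (ENNReal.ofReal (F s)))) :
    ConvexOn ℝ Set.univ F :=
  midpoint_mono_convex F hFmono
    (rate_midpoint_ineq η hη F hFnn hFmono Φ hmono h0 hmid hlim)
end

section
/- Let μ < 1, M > 0, η > 0 and set g(x) = η x²/2. Suppose Φ_N : ℝ → [0,∞] are non-decreasing, Φ_N = ∞ on (1,∞), Φ_N ≤ M on (-∞,1], and satisfy the approximate midpoint convexity: for all ε' > 0 there is N' with 2Φ_N(x) ≤ Φ_N(x-δ) + Φ_N(x+δ+2N^{-1/6}) + ε' for all N ≥ N', x, δ > 0. Suppose further there exists x₀ > 1 with lim_N [ inf_{y∈[0,2]} { Φ_N(y) + g(x₀ - y) } − Φ_N(1) − g(x₀-1) ] = 0. Then the family (Φ_N) is asymptotically equicontinuous on [μ,1]: for all ε>0 there exist δ>0 and N_ε with |Φ_N(x)−Φ_N(y)| ≤ ε for all N ≥ N_ε and x, y ∈ [μ,1],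 |x−y| ≤ δ. -/
open Filter Topology ENNReal

set_option maxHeartbeats 2000000 in
/-- abstract Proposition 4.5: the prelimit rate functions `Φ_N` are
asymptotically equicontinuous on `[μ,1]`, given approximate midpoint convexity and
exactness at `1` of the infimal convolution with the parabola `g(x) = η x²/2`. -/
theorem prelimit_equicontinuity (η μ M : ℝ) (hη : 0 < η) (hμ : μ < 1) (hM : 0 < M)
    (Φ : ℕ → ℝ → ℝ≥0∞)
    (hmono : ∀ N, Monotone (Φ N))
    (htop : ∀ N, ∀ x : ℝ, 1 < x → Φ N x = ⊤)
    (hbd : ∀ N, ∀ x : ℝ, x ≤ 1 → Φ N x ≤ ENNReal.ofReal M)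
    (hmid : ∀ ε' > (0:ℝ), ∃ N' : ℕ, ∀ N ≥ N', ∀ x : ℝ, ∀ δ > (0:ℝ),
      2 * Φ N x ≤ Φ N (x - δ) + Φ N (x + δ + 2 * (N:ℝ) ^ (-(1:ℝ)/6))
        + ENNReal.ofReal ε')
    (hx0 : ∃ x0 > (1:ℝ), Tendsto
      (fun N => (⨅ y ∈ Set.Icc (0:ℝ) 2, Φ N y + ENNReal.ofReal (η * (x0 - y)^2 / 2)).toReal
        - (Φ N 1).toReal - η * (x0 - 1)^2 / 2) atTop (𝓝 0)) :
    ∀ ε > (0:ℝ), ∃ δ > (0:ℝ), ∃ N0 : ℕ, ∀ N ≥ N0,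
      ∀ x ∈ Set.Icc μ 1, ∀ y ∈ Set.Icc μ 1, |x - y| ≤ δ →
        Φ N x ≤ Φ N y + ENNReal.ofReal ε := by
  classical
  obtain ⟨x0, hx0gt, htend⟩ := hx0
  intro ε hε
  obtain ⟨C, hC⟩ : ∃ C : ℝ, C = η * x0 := ⟨_, rfl⟩
  have hCpos : 0 < C := by rw [hC]; exact mul_pos hη (by linarith)
  obtain ⟨δ, hδdef⟩ : ∃ δ : ℝ, δ = min (1/4) (ε / (16 * C)) := ⟨_, rfl⟩
  have hδpos : 0 < δ := by rw [hδdef]; exact lt_min (by norm_num) (by positivity)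
  have hδ14 : δ ≤ 1/4 := by rw [hδdef]; exact min_le_left _ _
  have hCδ : C * δ ≤ ε / 16 := by
    have h1 : δ ≤ ε / (16 * C) := by rw [hδdef]; exact min_le_right _ _
    have h2 := mul_le_mul_of_nonneg_left h1 hCpos.le
    have h3 : C * (ε / (16 * C)) = ε / 16 := by field_simp
    linarith
  obtain ⟨Kr, hKr⟩ : ∃ Kr : ℝ, Kr = (1 - μ) / δ := ⟨_, rfl⟩
  have hKrpos : 0 < Kr := by rw [hKr]; exact div_pos (by linarith) hδpos
  obtain ⟨ε', hε'def⟩ : ∃ e : ℝ, e = ε / (4 * (Kr + 1)) := ⟨_, rfl⟩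
  have hε'pos : 0 < ε' := by rw [hε'def]; positivity
  obtain ⟨s0, hs0def⟩ : ∃ t : ℝ,
      t = min (ε / (8 * C * (2 * Kr + 1))) (1 / (2 * (2 * Kr + 1))) := ⟨_, rfl⟩
  have hs0pos : 0 < s0 := by rw [hs0def]; exact lt_min (by positivity) (by positivity)
  obtain ⟨N', hN'⟩ := hmid ε' hε'pos
  obtain ⟨N'', hN''⟩ := Metric.tendsto_atTop.mp htend (ε/4) (by positivity)
  have hstend : Tendsto (fun N : ℕ => 2 * (N:ℝ) ^ (-(1:ℝ)/6)) atTop (𝓝 (0:ℝ)) := by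
    have hrp : Tendsto (fun z : ℝ => z ^ (-(1:ℝ)/6)) atTop (𝓝 (0:ℝ)) := by
      simp only [neg_div]
      exact tendsto_rpow_neg_atTop (by norm_num)
    have h2 := (hrp.comp tendsto_natCast_atTop_atTop).const_mul (2:ℝ)
    simpa using h2
  obtain ⟨N1, hN1⟩ := Metric.tendsto_atTop.mp hstend s0 hs0pos
  refine ⟨δ, hδpos, max N' (max N'' N1), ?_⟩
  intro N hN x hx y hy hxy
  have hNa : N' ≤ N := le_trans (le_max_left _ _) hN
  have hNb : N'' ≤ N := le_trans (le_trans (le_max_left _ _) (le_max_right N' _)) hN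
  have hNc : N1 ≤ N := le_trans (le_trans (le_max_right _ _) (le_max_right N' _)) hN
  by_cases hxy' : x ≤ y
  · exact le_trans (hmono N hxy') le_self_add
  push_neg at hxy'
  have hyx : x - δ ≤ y := by linarith [(abs_le.mp hxy).2]
  obtain ⟨s, hsdef⟩ : ∃ s : ℝ, s = 2 * (N:ℝ) ^ (-(1:ℝ)/6) := ⟨_, rfl⟩
  have hsnn : 0 ≤ s := by rw [hsdef]; positivity
  have hss : s ≤ s0 := by
    have h := hN1 N hNc
    rw [Real.dist_eq, sub_zero] at h
    calc s ≤ |2 * (N:ℝ) ^ (-(1:ℝ)/6)| := by rw [hsdef]; exact le_abs_self _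
      _ ≤ s0 := h.le
  have hfin : ∀ t : ℝ, t ≤ 1 → Φ N t ≠ ⊤ :=
    fun t ht => ne_top_of_le_ne_top ofReal_ne_top (hbd N t ht)
  have hx1 : x ≤ 1 := hx.2
  have hxμ : μ ≤ x := hx.1
  -- real form of the midpoint inequality
  have hmidreal : ∀ q d : ℝ, 0 < d → q + d + s ≤ 1 →
      2 * (Φ N q).toReal ≤ (Φ N (q - d)).toReal + (Φ N (q + d + s)).toReal + ε' := by
    intro q d hd hle
    have key := hN' N hNa q d hd
    rw [← hsdef] at key
    have hq1 : q - d ≤ 1 := by linarith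
    have hne1 := hfin _ hq1
    have hne2 := hfin _ hle
    have hne3 : Φ N (q - d) + Φ N (q + d + s) ≠ ⊤ := by
      simp [ENNReal.add_ne_top, hne1, hne2]
    have hne : Φ N (q - d) + Φ N (q + d + s) + ENNReal.ofReal ε' ≠ ⊤ := by
      simp [ENNReal.add_ne_top, hne1, hne2]
    have h := ENNReal.toReal_mono hne key
    rw [ENNReal.toReal_add hne3 ofReal_ne_top, ENNReal.toReal_add hne1 hne2,
      ENNReal.toReal_ofReal hε'pos.le, ENNReal.toReal_mul] at h
    simpa using h
  -- near-1 modulus of continuity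
  have hnear : ∀ t : ℝ, 0 ≤ t → t ≤ 1 →
      (Φ N 1).toReal ≤ (Φ N t).toReal + C * (1 - t) + ε / 4 := by
    intro t ht0 ht1
    have hmem : t ∈ Set.Icc (0:ℝ) 2 := ⟨ht0, by linarith⟩
    have hinf_le : (⨅ y ∈ Set.Icc (0:ℝ) 2, Φ N y + ENNReal.ofReal (η * (x0 - y)^2 / 2))
        ≤ Φ N t + ENNReal.ofReal (η * (x0 - t)^2 / 2) := iInf₂_le t hmem
    have hne : Φ N t + ENNReal.ofReal (η * (x0 - t)^2 / 2) ≠ ⊤ := by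
      simp [ENNReal.add_ne_top, hfin t ht1]
    have h2 := ENNReal.toReal_mono hne hinf_le
    have hg0 : (0:ℝ) ≤ η * (x0 - t)^2 / 2 := by
      have := mul_nonneg hη.le (sq_nonneg (x0 - t)); linarith
    rw [ENNReal.toReal_add (hfin t ht1) ofReal_ne_top,
      ENNReal.toReal_ofReal hg0] at h2
    have h3 := hN'' N hNb
    rw [Real.dist_eq, sub_zero] at h3
    have h4 := (abs_lt.mp h3).1
    rw [hC]
    nlinarith [mul_nonneg (mul_nonneg hη.le (sub_nonneg.2 ht1)) (by linarith : (0:ℝ) ≤ t + 1)]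
  -- the chain of points
  obtain ⟨p, hpdef⟩ : ∃ p : ℕ → ℝ,
      p = fun j : ℕ => x - δ + (j:ℝ) * δ + s * ((j:ℝ) * ((j:ℝ)+1)) / 2 - s * (j:ℝ) := ⟨_, rfl⟩
  have hp0 : p 0 = x - δ := by simp [hpdef]
  have hp1 : p 1 = x := by simp only [hpdef]; push_cast; ring
  have hstep : ∀ j : ℕ, p j ≤ p (j+1) := by
    intro j
    simp only [hpdef]; push_cast
    linarith [mul_nonneg hsnn (Nat.cast_nonneg j : (0:ℝ) ≤ (j:ℝ))]
  have hplb : ∀ j : ℕ, x + (j:ℝ) * δ ≤ p (j+1) := by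
    intro j
    simp only [hpdef]; push_cast
    have hq : (0:ℝ) ≤ s * (j:ℝ) * ((j:ℝ) + 1) :=
      mul_nonneg (mul_nonneg hsnn (Nat.cast_nonneg j)) (by positivity)
    nlinarith [hq]
  have hP0 : p (0+1) ≤ 1 := by
    have h : p (0+1) = x := hp1
    rw [h]; exact hx1
  obtain ⟨B, hB⟩ : ∃ B : ℕ, B = ⌈Kr⌉₊ + 1 := ⟨_, rfl⟩
  have hPB : ¬ p (B+1) ≤ 1 := by
    intro h
    have h1 := hplb B
    have h2 : (B:ℝ) * δ ≤ 1 - μ := by linarith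
    have h3 : (B:ℝ) ≤ Kr := by
      rw [hKr, le_div_iff₀ hδpos]; exact h2
    have h4 : Kr ≤ (⌈Kr⌉₊ : ℝ) := Nat.le_ceil Kr
    rw [hB] at h3
    push_cast at h3
    linarith
  obtain ⟨k, hk⟩ : ∃ k : ℕ, k = Nat.findGreatest (fun j => p (j+1) ≤ 1) B := ⟨_, rfl⟩
  have hPk : p (k+1) ≤ 1 := by
    rw [hk]
    exact Nat.findGreatest_spec (P := fun j => p (j+1) ≤ 1) (Nat.zero_le B) hP0
  have hkB : k ≤ B := by rw [hk]; exact Nat.findGreatest_le B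
  have hkltB : k < B := lt_of_le_of_ne hkB (by intro he; rw [he] at hPk; exact hPB hPk)
  have hnPk1 : ¬ p (k+1+1) ≤ 1 := by
    rw [hk]
    exact Nat.findGreatest_is_greatest (P := fun j => p (j+1) ≤ 1)
      (Nat.lt_succ_self _) (by omega)
  have hp2k : 1 < p (k+2) := not_le.mp hnPk1
  have hkKr : (k:ℝ) ≤ Kr := by
    have h1 := hplb k
    have h2 : (k:ℝ) * δ ≤ 1 - μ := by linarith
    rw [hKr, le_div_iff₀ hδpos]; exact h2
  -- iterating the midpoint inequality along the chain
  have hchain : ∀ j : ℕ, p (j+1) ≤ 1 →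
      (Φ N (p 1)).toReal - (Φ N (p 0)).toReal ≤
        (Φ N (p (j+1))).toReal - (Φ N (p j)).toReal + (j:ℝ) * ε' := by
    intro j
    induction j with
    | zero => intro _; simp
    | succ j ih =>
      intro hle
      have hle' : p (j+1) ≤ 1 := (hstep (j+1)).trans hle
      have h1 := ih hle'
      have hd : (0:ℝ) < δ + (j:ℝ) * s :=
        add_pos_of_pos_of_nonneg hδpos (mul_nonneg (Nat.cast_nonneg j) hsnn)
      have e1 : p (j+1) - (δ + (j:ℝ)*s) = p j := by simp only [hpdef]; push_cast; ring
      have e2 : p (j+1) + (δ + (j:ℝ)*s) + s = p (j+1+1) := by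
        simp only [hpdef]; push_cast; ring
      have h2 := hmidreal (p (j+1)) (δ + (j:ℝ)*s) hd (by rw [e2]; exact hle)
      rw [e1, e2] at h2
      push_cast
      linarith
  -- final estimates
  have hpk1 : p k ≤ 1 := (hstep k).trans hPk
  have e3 : p (k+2) = p k + (2*δ + (2*(k:ℝ)+1)*s) := by simp only [hpdef]; push_cast; ring
  have h1pk : 1 - p k ≤ 2*δ + (2*(k:ℝ)+1)*s := by rw [e3] at hp2k; linarith
  have h2k1 : (2*(k:ℝ)+1) * s ≤ (2*Kr+1) * s0 :=
    mul_le_mul (by linarith) hss hsnn (by linarith)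
  have hKrne : (2*Kr+1) ≠ 0 := by positivity
  have hCne : C ≠ 0 := ne_of_gt hCpos
  have hs0b : s0 ≤ 1/(2*(2*Kr+1)) := by rw [hs0def]; exact min_le_right _ _
  have hs0a : s0 ≤ ε/(8*C*(2*Kr+1)) := by rw [hs0def]; exact min_le_left _ _
  have hhalf : (2*Kr+1) * s0 ≤ 1/2 := by
    have h := mul_le_mul_of_nonneg_left hs0b (by linarith : (0:ℝ) ≤ 2*Kr+1)
    have he : (2*Kr+1) * (1/(2*(2*Kr+1))) = 1/2 := by field_simp
    linarith
  have hCe8 : C * ((2*Kr+1) * s0) ≤ ε/8 := by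
    have h := mul_le_mul_of_nonneg_left hs0a (by linarith : (0:ℝ) ≤ 2*Kr+1)
    have h' := mul_le_mul_of_nonneg_left h hCpos.le
    have he : C * ((2*Kr+1) * (ε/(8*C*(2*Kr+1)))) = ε/8 := by
      field_simp
    linarith
  have hpk0 : 0 ≤ p k := by linarith
  have hmono1 : (Φ N (p (k+1))).toReal ≤ (Φ N 1).toReal :=
    ENNReal.toReal_mono (hfin 1 le_rfl) (hmono N hPk)
  have hA := hchain k hPk
  rw [hp1, hp0] at hA
  have hnr := hnear (p k) hpk0 hpk1
  have hkε : (k:ℝ) * ε' ≤ ε/4 := by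
    have h1 : (k:ℝ) * ε' ≤ (Kr+1) * ε' :=
      mul_le_mul_of_nonneg_right (by linarith) hε'pos.le
    have h2 : (Kr+1) * ε' = ε/4 := by
      rw [hε'def]; field_simp
    linarith
  have hCmul := mul_le_mul_of_nonneg_left h1pk hCpos.le
  have hCmul2 : C * ((2*(k:ℝ)+1)*s) ≤ ε/8 := by
    have h := mul_le_mul_of_nonneg_left h2k1 hCpos.le
    linarith
  have hCexp : C * (2*δ + (2*(k:ℝ)+1)*s) = 2*(C*δ) + C*((2*(k:ℝ)+1)*s) := by ring
  have hby : (Φ N (x-δ)).toReal ≤ (Φ N y).toReal :=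
    ENNReal.toReal_mono (hfin y hy.2) (hmono N hyx)
  have hfinal : (Φ N x).toReal ≤ (Φ N y).toReal + ε := by linarith
  calc Φ N x = ENNReal.ofReal (Φ N x).toReal := (ENNReal.ofReal_toReal (hfin x hx1)).symm
    _ ≤ ENNReal.ofReal ((Φ N y).toReal + ε) := ENNReal.ofReal_le_ofReal hfinal
    _ = ENNReal.ofReal ((Φ N y).toReal) + ENNReal.ofReal ε :=
        ENNReal.ofReal_add ENNReal.toReal_nonneg hε.le
    _ = Φ N y + ENNReal.ofReal ε := by rw [ENNReal.ofReal_toReal (hfin y hy.2)]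
end
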